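/- arXiv:2410.11206 — 4 statements merged into one kernel-verified Lean document; each statement's English description precedes it below -/
import Mathlib

section
/- Positive gradient correlation with the true-class feature (Claim pos (a)–(b)): assume the sample X has a patch decomposition with feature-noise level γ, and assume |⟨ξ_p, v_{i,l}⟩| ≤ σ′ for every p ∈ [P], where σ′ ≥ 0. If i = y, then for every r ∈ [m] and l ∈ [2]: (1 − logit_i(F(X))) · (V_{i,r,l}(X) − P σ′) ≤ ⟨ −∇_{w_{i,r}} L(W; X, y), v_{i,l} ⟩ ≤ (1 − logit_i(F(X))) · (V_{i,r,l}(X) + P (γ + σ′)), where −∇_{w_{i,r}} L = (1 − logit_i(F(X))) Σ_{p ∈ [P]} ρ̄'(⟨w_{i,r}, x_p⟩) x_p. -/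
open scoped RealInnerProductSpace BigOperators

/-- The smoothed ReLU `ρ̄`. -/
noncomputable def sReLU (q : ℕ) (ϱ : ℝ) (z : ℝ) : ℝ :=
  if z ≤ 0 then 0 else if z ≤ ϱ then z ^ q / (q * ϱ ^ (q - 1)) else z - (1 - 1 / (q : ℝ)) * ϱ

/-- The derivative `ρ̄'` of the smoothed ReLU. -/
noncomputable def sReLU' (q : ℕ) (ϱ : ℝ) (z : ℝ) : ℝ :=
  if z ≤ 0 then 0 else if z ≤ ϱ then (z / ϱ) ^ (q - 1) else 1

/-- The network output `F_i(X) = Σ_r Σ_p ρ̄(⟨w_{i,r}, x_p⟩)`. -/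
noncomputable def Fout {k m P d : ℕ} (q : ℕ) (ϱ : ℝ)
    (W : Fin k → Fin m → EuclideanSpace ℝ (Fin d))
    (X : Fin P → EuclideanSpace ℝ (Fin d)) (i : Fin k) : ℝ :=
  ∑ r, ∑ p, sReLU q ϱ ⟪W i r, X p⟫

/-- Softmax probabilities `logit_i(F)`. -/
noncomputable def logit {k : ℕ} (F : Fin k → ℝ) (i : Fin k) : ℝ :=
  Real.exp (F i) / ∑ j, Real.exp (F j)

/-- Claim pos (a)–(b): two-sided bound on the correlation of the (negative) gradient of the
cross-entropy loss at a true-class kernel `w_{i,r}` (`i = y`) with the true-class feature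
`v_{i,l}`, where the negative gradient is
`(1 − logit_i(F(X))) Σ_p ρ̄'(⟨w_{i,r}, x_p⟩) x_p` and
`V_{i,r,l}(X) = Σ_{p ∈ Pv_{i,l}} ρ̄'(⟨w_{i,r}, x_p⟩) z_p`. -/
theorem pos_gradient_true_feature
    {k m P d : ℕ} (hk : 0 < k) (hm : 0 < m) (hP : 0 < P) (hd : 0 < d)
    (q : ℕ) (hq : 3 ≤ q) (ϱ : ℝ) (hϱ : 0 < ϱ)
    (W : Fin k → Fin m → EuclideanSpace ℝ (Fin d))
    (X : Fin P → EuclideanSpace ℝ (Fin d)) (y : Fin k)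
    -- features: an orthonormal family of `2k` vectors
    (v : Fin k → Fin 2 → EuclideanSpace ℝ (Fin d))
    (hv : Orthonormal ℝ (fun jl : Fin k × Fin 2 => v jl.1 jl.2))
    -- patch decomposition of `X` with feature-noise level `γ`
    (Pv : Fin k × Fin 2 → Finset (Fin P))
    (hdisj : ∀ a b : Fin k × Fin 2, a ≠ b → Disjoint (Pv a) (Pv b))
    (z : Fin P → ℝ) (hz : ∀ p, 0 ≤ z p)
    (γ : ℝ) (hγ : 0 ≤ γ)
    (α : Fin P → Fin k × Fin 2 → ℝ) (hα : ∀ p jl, α p jl ∈ Set.Icc (0 : ℝ) γ)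
    (ξ : Fin P → EuclideanSpace ℝ (Fin d))
    (hfeat : ∀ jl : Fin k × Fin 2, ∀ p ∈ Pv jl,
      X p = z p • v jl.1 jl.2 + (∑ jl' : Fin k × Fin 2, α p jl' • v jl'.1 jl'.2) + ξ p)
    (hnoisy : ∀ p : Fin P, (∀ jl : Fin k × Fin 2, p ∉ Pv jl) →
      X p = (∑ jl' : Fin k × Fin 2, α p jl' • v jl'.1 jl'.2) + ξ p)
    -- noise correlation bound
    (σ' : ℝ) (hσ' : 0 ≤ σ')
    (i : Fin k) (hiy : i = y)
    (hξ : ∀ (p : Fin P) (l : Fin 2), |⟪ξ p, v i l⟫| ≤ σ')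
    (r : Fin m) (l : Fin 2) :
    (1 - logit (Fout q ϱ W X) i) *
        ((∑ p ∈ Pv (i, l), sReLU' q ϱ ⟪W i r, X p⟫ * z p) - P * σ') ≤
      ⟪(1 - logit (Fout q ϱ W X) i) • ∑ p, sReLU' q ϱ ⟪W i r, X p⟫ • X p, v i l⟫ ∧
    ⟪(1 - logit (Fout q ϱ W X) i) • ∑ p, sReLU' q ϱ ⟪W i r, X p⟫ • X p, v i l⟫ ≤
      (1 - logit (Fout q ϱ W X) i) *
        ((∑ p ∈ Pv (i, l), sReLU' q ϱ ⟪W i r, X p⟫ * z p) + P * (γ + σ')) := by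

  classical
  -- abbreviations
  set c : ℝ := 1 - logit (Fout q ϱ W X) i with hc
  set s : Fin P → ℝ := fun p => sReLU' q ϱ ⟪W i r, X p⟫ with hs
  -- 0 ≤ s p ≤ 1
  have hs01 : ∀ p, 0 ≤ s p ∧ s p ≤ 1 := by
    intro p
    simp only [hs, sReLU']
    split_ifs with h1 h2
    · exact ⟨le_refl 0, zero_le_one⟩
    · constructor
      · exact pow_nonneg (div_nonneg (le_of_not_ge h1) hϱ.le) _
      · apply pow_le_one₀ (div_nonneg (le_of_not_ge h1) hϱ.le)
        rw [div_le_one hϱ]; exact h2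
    · exact ⟨zero_le_one, le_refl 1⟩
  -- 0 ≤ c
  have hc0 : 0 ≤ c := by
    have hpos : (0:ℝ) < ∑ j, Real.exp (Fout q ϱ W X j) := by
      apply Finset.sum_pos (fun j _ => Real.exp_pos _)
      exact ⟨i, Finset.mem_univ i⟩
    have : logit (Fout q ϱ W X) i ≤ 1 := by
      rw [logit, div_le_one hpos]
      exact Finset.single_le_sum (fun j _ => (Real.exp_pos _).le) (Finset.mem_univ i)
    linarith
  -- orthonormality in ite form
  have hvv : ∀ a b : Fin k × Fin 2,
      ⟪v a.1 a.2, v b.1 b.2⟫ = if a = b then (1:ℝ) else 0 := by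
    intro a b
    have := orthonormal_iff_ite.mp hv a b
    simpa using this
  -- inner of the feature-noise sum with v i l
  have hαinner : ∀ p, ⟪∑ jl' : Fin k × Fin 2, α p jl' • v jl'.1 jl'.2, v i l⟫ = α p (i, l) := by
    intro p
    rw [sum_inner]
    have : ∀ jl' : Fin k × Fin 2,
        ⟪α p jl' • v jl'.1 jl'.2, v i l⟫ = if jl' = (i, l) then α p jl' else 0 := by
      intro jl'
      rw [real_inner_smul_left, hvv jl' (i, l)]
      split_ifs <;> ring
    simp_rw [this]
    simp
  -- key inner product decomposition
  have hip : ∀ p, ⟪X p, v i l⟫ =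
      (if p ∈ Pv (i, l) then z p else 0) + α p (i, l) + ⟪ξ p, v i l⟫ := by
    intro p
    by_cases hex : ∃ jl : Fin k × Fin 2, p ∈ Pv jl
    · obtain ⟨jl, hp⟩ := hex
      rw [hfeat jl p hp, inner_add_left, inner_add_left, real_inner_smul_left,
        hvv jl (i, l), hαinner p]
      by_cases hjl : jl = (i, l)
      · subst hjl
        simp [hp]
      · have hnp : p ∉ Pv (i, l) :=
          Finset.disjoint_left.mp (hdisj jl (i, l) hjl) hp
        simp [hjl, hnp]
    · push_neg at hex
      rw [hnoisy p hex, inner_add_left, hαinner p]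
      simp [hex (i, l)]
  -- the raw inner product sum
  have hS : ⟪∑ p, s p • X p, v i l⟫ =
      (∑ p ∈ Pv (i, l), s p * z p) + ∑ p, s p * (α p (i, l) + ⟪ξ p, v i l⟫) := by
    rw [sum_inner]
    simp_rw [real_inner_smul_left, hip]
    have h1 : ∀ p, s p * ((if p ∈ Pv (i, l) then z p else 0) + α p (i, l) + ⟪ξ p, v i l⟫)
        = (if p ∈ Pv (i, l) then s p * z p else 0) + s p * (α p (i, l) + ⟪ξ p, v i l⟫) := by
      intro p; split_ifs <;> ring
    simp_rw [h1]
    rw [Finset.sum_add_distrib, Finset.sum_ite_mem, Finset.univ_inter]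
  -- bound the perturbation sum
  have hpert : ∀ p, -σ' ≤ s p * (α p (i, l) + ⟪ξ p, v i l⟫) ∧
      s p * (α p (i, l) + ⟪ξ p, v i l⟫) ≤ γ + σ' := by
    intro p
    obtain ⟨hs0, hs1⟩ := hs01 p
    obtain ⟨hα0, hαγ⟩ := hα p (i, l)
    have hξp := hξ p l
    have h1 : -σ' ≤ α p (i, l) + ⟪ξ p, v i l⟫ := by
      have := abs_le.mp hξp
      linarith
    have h2 : α p (i, l) + ⟪ξ p, v i l⟫ ≤ γ + σ' := by
      have := abs_le.mp hξp
      linarith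
    constructor
    · rcases le_or_gt 0 (α p (i, l) + ⟪ξ p, v i l⟫) with h | h
      · nlinarith
      · nlinarith
    · rcases le_or_gt 0 (α p (i, l) + ⟪ξ p, v i l⟫) with h | h
      · nlinarith
      · nlinarith
  have hlow : -(P * σ') ≤ ∑ p, s p * (α p (i, l) + ⟪ξ p, v i l⟫) := by
    calc -((P:ℝ) * σ') = ∑ _p : Fin P, (-σ') := by
          simp [Finset.sum_const, mul_comm]
      _ ≤ _ := Finset.sum_le_sum (fun p _ => (hpert p).1)
  have hhigh : ∑ p, s p * (α p (i, l) + ⟪ξ p, v i l⟫) ≤ P * (γ + σ') := by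
    calc ∑ p, s p * (α p (i, l) + ⟪ξ p, v i l⟫)
        ≤ ∑ _p : Fin P, (γ + σ') := Finset.sum_le_sum (fun p _ => (hpert p).2)
      _ = P * (γ + σ') := by
          rw [Finset.sum_const, Finset.card_univ, Fintype.card_fin, nsmul_eq_mul]
  -- put together
  rw [real_inner_smul_left, hS]
  constructor
  · apply mul_le_mul_of_nonneg_left _ hc0
    linarith
  · apply mul_le_mul_of_nonneg_left _ hc0
    linarith
end

section
/- Positive gradient correlation with other-class features (Claim pos (c)): assume the sample X has a patch decomposition with feature-noise level γ, and assume |⟨ξ_p, v_{j,l}⟩| ≤ σ′ for every p ∈ [P], where σ′ ≥ 0. If i = y, then for every r ∈ [m], every j ∈ [k] with j ≠ i, and every l ∈ [2]: | ⟨ −∇_{w_{i,r}} L(W; X, y), v_{j,l} ⟩ | ≤ (1 − logit_i(F(X))) · ( Σ_{p ∈ 𝒫_{j,l}} ρ̄'(⟨w_{i,r}, x_p⟩) z_p + P (γ + σ′) ), where −∇_{w_{i,r}} L = (1 − logit_i(F(X))) Σ_{p ∈ [P]} ρ̄'(⟨w_{i,r}, x_p⟩) x_p. -/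
open scoped RealInnerProductSpace BigOperators

/-- Claim pos (c): bound on the correlation of the (negative) gradient of the cross-entropy
loss at a true-class kernel `w_{i,r}` (`i = y`) with the other-class features `v_{j,l}`
(`j ≠ i`), where the negative gradient is
`(1 − logit_i(F(X))) Σ_p ρ̄'(⟨w_{i,r}, x_p⟩) x_p`. -/
theorem pos_gradient_other_feature
    {k m P d : ℕ} (hk : 0 < k) (hm : 0 < m) (hP : 0 < P) (hd : 0 < d)
    (q : ℕ) (hq : 3 ≤ q) (ϱ : ℝ) (hϱ : 0 < ϱ)
    (W : Fin k → Fin m → EuclideanSpace ℝ (Fin d))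
    (X : Fin P → EuclideanSpace ℝ (Fin d)) (y : Fin k)
    -- features: an orthonormal family of `2k` vectors
    (v : Fin k → Fin 2 → EuclideanSpace ℝ (Fin d))
    (hv : Orthonormal ℝ (fun jl : Fin k × Fin 2 => v jl.1 jl.2))
    -- patch decomposition of `X` with feature-noise level `γ`
    (Pv : Fin k × Fin 2 → Finset (Fin P))
    (hdisj : ∀ a b : Fin k × Fin 2, a ≠ b → Disjoint (Pv a) (Pv b))
    (z : Fin P → ℝ) (hz : ∀ p, 0 ≤ z p)
    (γ : ℝ) (hγ : 0 ≤ γ)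
    (α : Fin P → Fin k × Fin 2 → ℝ) (hα : ∀ p jl, α p jl ∈ Set.Icc (0 : ℝ) γ)
    (ξ : Fin P → EuclideanSpace ℝ (Fin d))
    (hfeat : ∀ jl : Fin k × Fin 2, ∀ p ∈ Pv jl,
      X p = z p • v jl.1 jl.2 + (∑ jl' : Fin k × Fin 2, α p jl' • v jl'.1 jl'.2) + ξ p)
    (hnoisy : ∀ p : Fin P, (∀ jl : Fin k × Fin 2, p ∉ Pv jl) →
      X p = (∑ jl' : Fin k × Fin 2, α p jl' • v jl'.1 jl'.2) + ξ p)
    -- noise correlation bound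
    (σ' : ℝ) (hσ' : 0 ≤ σ')
    (hξ : ∀ (p : Fin P) (j : Fin k) (l : Fin 2), |⟪ξ p, v j l⟫| ≤ σ')
    (i : Fin k) (hiy : i = y)
    (r : Fin m) (j : Fin k) (hji : j ≠ i) (l : Fin 2) :
    |⟪(1 - logit (Fout q ϱ W X) i) • ∑ p, sReLU' q ϱ ⟪W i r, X p⟫ • X p, v j l⟫| ≤
      (1 - logit (Fout q ϱ W X) i) *
        ((∑ p ∈ Pv (j, l), sReLU' q ϱ ⟪W i r, X p⟫ * z p) + P * (γ + σ')) := by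
  classical
  set s : Fin P → ℝ := fun p => sReLU' q ϱ ⟪W i r, X p⟫ with hs
  have hs0 : ∀ p, 0 ≤ s p := by
    intro p
    simp only [hs, sReLU']
    split_ifs with h1 h2
    · exact le_refl 0
    · exact pow_nonneg (div_nonneg (le_of_lt (not_le.mp h1)) hϱ.le) _
    · exact zero_le_one
  have hs1 : ∀ p, s p ≤ 1 := by
    intro p
    simp only [hs, sReLU']
    split_ifs with h1 h2
    · exact zero_le_one
    · exact pow_le_one₀ (div_nonneg (le_of_lt (not_le.mp h1)) hϱ.le)
        ((div_le_one hϱ).mpr h2)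
    · exact le_refl 1
  -- 1 - logit ≥ 0
  have hpos : 0 < ∑ j', Real.exp (Fout q ϱ W X j') :=
    Finset.sum_pos (fun _ _ => Real.exp_pos _) ⟨i, Finset.mem_univ i⟩
  have hL1 : logit (Fout q ϱ W X) i ≤ 1 := by
    unfold logit
    exact (div_le_one hpos).mpr
      (Finset.single_le_sum (fun j' _ => (Real.exp_pos (Fout q ϱ W X j')).le)
        (Finset.mem_univ i))
  have hLnn : 0 ≤ 1 - logit (Fout q ϱ W X) i := by linarith
  -- orthonormality
  have hvv : ∀ a b : Fin k × Fin 2, ⟪v a.1 a.2, v b.1 b.2⟫ = if a = b then (1:ℝ) else 0 := by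
    intro a b
    simpa using orthonormal_iff_ite.mp hv a b
  have hsumv : ∀ p : Fin P,
      ⟪(∑ jl' : Fin k × Fin 2, α p jl' • v jl'.1 jl'.2), v j l⟫ = α p (j, l) := by
    intro p
    rw [sum_inner]
    have : ∀ a : Fin k × Fin 2,
        ⟪α p a • v a.1 a.2, v j l⟫ = if a = (j, l) then α p a else 0 := by
      intro a
      rw [real_inner_smul_left]
      have := hvv a (j, l)
      simp only at this
      rw [this]
      split_ifs <;> ring
    simp only [this]
    simp
  have hXp : ∀ p : Fin P,
      ⟪X p, v j l⟫ = (if p ∈ Pv (j, l) then z p else 0) + (α p (j, l) + ⟪ξ p, v j l⟫) := by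
    intro p
    by_cases hex : ∃ a : Fin k × Fin 2, p ∈ Pv a
    · obtain ⟨a, ha⟩ := hex
      rw [hfeat a p ha, inner_add_left, inner_add_left, real_inner_smul_left, hsumv]
      have hva := hvv a (j, l)
      simp only at hva
      rw [hva]
      by_cases haj : a = (j, l)
      · subst haj
        rw [if_pos rfl, if_pos ha]
        ring
      · have hnp : p ∉ Pv (j, l) :=
          fun hmem => (Finset.disjoint_left.mp (hdisj a (j, l) haj)) ha hmem
        rw [if_neg haj, if_neg hnp]
        ring
    · push_neg at hex
      rw [hnoisy p hex, inner_add_left, hsumv, if_neg (hex (j, l))]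
      ring
  -- main bound on the inner sum
  have hmain : |⟪(∑ p, s p • X p), v j l⟫| ≤
      (∑ p ∈ Pv (j, l), s p * z p) + P * (γ + σ') := by
    rw [sum_inner]
    simp only [real_inner_smul_left]
    calc |∑ p, s p * ⟪X p, v j l⟫| ≤ ∑ p, |s p * ⟪X p, v j l⟫| :=
          Finset.abs_sum_le_sum_abs _ _
      _ ≤ ∑ p, ((if p ∈ Pv (j, l) then s p * z p else 0) + (γ + σ')) := by
          apply Finset.sum_le_sum
          intro p _
          rw [hXp p]
          have h1 : |s p * ((if p ∈ Pv (j, l) then z p else 0) + (α p (j, l) + ⟪ξ p, v j l⟫))|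
              ≤ s p * (if p ∈ Pv (j, l) then z p else 0) + |α p (j, l) + ⟪ξ p, v j l⟫| := by
            rw [mul_add]
            refine (abs_add_le _ _).trans (add_le_add (le_of_eq ?_) ?_)
            · rw [abs_of_nonneg (mul_nonneg (hs0 p) (by split_ifs; exacts [hz p, le_refl 0]))]
            · rw [abs_mul, abs_of_nonneg (hs0 p)]
              exact mul_le_of_le_one_left (abs_nonneg _) (hs1 p)
          refine h1.trans ?_
          gcongr
          · rw [mul_ite, mul_zero]
          · refine (abs_add_le _ _).trans ?_
            have hαp := hα p (j, l)
            have := hξ p j l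
            rw [abs_of_nonneg hαp.1]
            linarith [hαp.2]
      _ = (∑ p ∈ Pv (j, l), s p * z p) + P * (γ + σ') := by
          rw [Finset.sum_add_distrib, Finset.sum_ite_mem, Finset.univ_inter,
            Finset.sum_const, Finset.card_univ, Fintype.card_fin, nsmul_eq_mul]
  rw [real_inner_smul_left, abs_mul, abs_of_nonneg hLnn]
  exact mul_le_mul_of_nonneg_left hmain hLnn
end

section
/- Negative gradient correlations (Claim neg (a)–(c)): assume the sample X has a patch decomposition with feature-noise level γ, and assume |⟨ξ_p, v_{j,l}⟩| ≤ σ′ for every p ∈ [P], every j ∈ [k], every l ∈ [2], where σ′ ≥ 0. If i ≠ y, then for every r ∈ [m], every j ∈ [k], and every l ∈ [2]: ⟨ −∇_{w_{i,r}} L(W; X, y), v_{j,l} ⟩ ≤ logit_i(F(X)) · P σ′, and ⟨ −∇_{w_{i,r}} L(W; X, y), v_{j,l} ⟩ ≥ −logit_i(F(X)) · ( Σ_{p ∈ 𝒫_{j,l}} ρ̄'(⟨w_{i,r}, x_p⟩) z_p + P (γ + σ′) ), where −∇_{w_{i,r}} L = −logit_i(F(X)) Σ_{p ∈ [P]} ρ̄'(⟨w_{i,r},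 x_p⟩) x_p. -/
open scoped RealInnerProductSpace BigOperators

/-- Claim neg (a)–(c): two-sided bound on the correlation of the (negative) gradient of the
cross-entropy loss at a wrong-class kernel `w_{i,r}` (`i ≠ y`) with every feature `v_{j,l}`,
where the negative gradient is `−logit_i(F(X)) Σ_p ρ̄'(⟨w_{i,r}, x_p⟩) x_p`. -/
theorem neg_gradient_feature_correlation
    {k m P d : ℕ} (hk : 0 < k) (hm : 0 < m) (hP : 0 < P) (hd : 0 < d)
    (q : ℕ) (hq : 3 ≤ q) (ϱ : ℝ) (hϱ : 0 < ϱ)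
    (W : Fin k → Fin m → EuclideanSpace ℝ (Fin d))
    (X : Fin P → EuclideanSpace ℝ (Fin d)) (y : Fin k)
    -- features: an orthonormal family of `2k` vectors
    (v : Fin k → Fin 2 → EuclideanSpace ℝ (Fin d))
    (hv : Orthonormal ℝ (fun jl : Fin k × Fin 2 => v jl.1 jl.2))
    -- patch decomposition of `X` with feature-noise level `γ`
    (Pv : Fin k × Fin 2 → Finset (Fin P))
    (hdisj : ∀ a b : Fin k × Fin 2, a ≠ b → Disjoint (Pv a) (Pv b))
    (z : Fin P → ℝ) (hz : ∀ p, 0 ≤ z p)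
    (γ : ℝ) (hγ : 0 ≤ γ)
    (α : Fin P → Fin k × Fin 2 → ℝ) (hα : ∀ p jl, α p jl ∈ Set.Icc (0 : ℝ) γ)
    (ξ : Fin P → EuclideanSpace ℝ (Fin d))
    (hfeat : ∀ jl : Fin k × Fin 2, ∀ p ∈ Pv jl,
      X p = z p • v jl.1 jl.2 + (∑ jl' : Fin k × Fin 2, α p jl' • v jl'.1 jl'.2) + ξ p)
    (hnoisy : ∀ p : Fin P, (∀ jl : Fin k × Fin 2, p ∉ Pv jl) →
      X p = (∑ jl' : Fin k × Fin 2, α p jl' • v jl'.1 jl'.2) + ξ p)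
    -- noise correlation bound
    (σ' : ℝ) (hσ' : 0 ≤ σ')
    (hξ : ∀ (p : Fin P) (j : Fin k) (l : Fin 2), |⟪ξ p, v j l⟫| ≤ σ')
    (i : Fin k) (hiy : i ≠ y)
    (r : Fin m) (j : Fin k) (l : Fin 2) :
    ⟪-(logit (Fout q ϱ W X) i • ∑ p, sReLU' q ϱ ⟪W i r, X p⟫ • X p), v j l⟫ ≤
      logit (Fout q ϱ W X) i * (P * σ') ∧
    -(logit (Fout q ϱ W X) i *
        ((∑ p ∈ Pv (j, l), sReLU' q ϱ ⟪W i r, X p⟫ * z p) + P * (γ + σ'))) ≤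
      ⟪-(logit (Fout q ϱ W X) i • ∑ p, sReLU' q ϱ ⟪W i r, X p⟫ • X p), v j l⟫ := by
  classical
  set L := logit (Fout q ϱ W X) i with hLdef
  set f : Fin P → ℝ := fun p => sReLU' q ϱ ⟪W i r, X p⟫ with hfdef
  have hL0 : 0 ≤ L := by
    have hpos : 0 < ∑ j', Real.exp (Fout q ϱ W X j') :=
      Finset.sum_pos (fun j' _ => Real.exp_pos _)
        (Finset.univ_nonempty_iff.mpr ⟨i⟩)
    exact div_nonneg (Real.exp_pos _).le hpos.le
  have hf0 : ∀ p, 0 ≤ f p := by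
    intro p
    simp only [hfdef, sReLU']
    split_ifs with h1 h2
    · exact le_refl 0
    · exact pow_nonneg (div_nonneg (le_of_lt (lt_of_not_ge h1)) hϱ.le) _
    · norm_num
  have hf1 : ∀ p, f p ≤ 1 := by
    intro p
    simp only [hfdef, sReLU']
    split_ifs with h1 h2
    · norm_num
    · exact pow_le_one₀ (div_nonneg (le_of_lt (lt_of_not_ge h1)) hϱ.le)
        (by rw [div_le_one hϱ]; exact h2)
    · exact le_refl 1
  -- orthonormality in ite form
  have hvv : ∀ a : Fin k × Fin 2, ⟪v a.1 a.2, v j l⟫ = if a = (j, l) then (1:ℝ) else 0 :=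
    fun a => orthonormal_iff_ite.mp hv a (j, l)
  -- exact value of the correlation of each patch with the feature
  have key : ∀ p : Fin P,
      ⟪X p, v j l⟫ = (if p ∈ Pv (j, l) then z p else 0) + α p (j, l) + ⟪ξ p, v j l⟫ := by
    intro p
    by_cases hp : ∃ jl', p ∈ Pv jl'
    · obtain ⟨jl', hp⟩ := hp
      have hmem : (if p ∈ Pv (j, l) then z p else 0)
          = z p * (if jl' = (j, l) then (1:ℝ) else 0) := by
        rcases eq_or_ne jl' (j, l) with h | h
        · subst h; simp [hp]
        · have hnot : p ∉ Pv (j, l) :=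
            Finset.disjoint_left.mp (hdisj jl' (j, l) h) hp
          simp [h, hnot]
      rw [hfeat jl' p hp]
      simp only [inner_add_left, sum_inner, real_inner_smul_left, hvv, mul_ite, mul_one,
        mul_zero, Finset.sum_ite_eq' Finset.univ, Finset.mem_univ, if_true]
      rw [hmem]
      split_ifs <;> ring
    · push_neg at hp
      rw [hnoisy p hp]
      simp only [inner_add_left, sum_inner, real_inner_smul_left, hvv, mul_ite, mul_one,
        mul_zero, Finset.sum_ite_eq' Finset.univ, Finset.mem_univ, if_true]
      have hnot : p ∉ Pv (j, l) := hp (j, l)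
      simp [hnot]
  -- rewrite the inner product as a scalar expression
  have hinner : ⟪-(L • ∑ p, f p • X p), v j l⟫ = -(L * ∑ p, f p * ⟪X p, v j l⟫) := by
    have hsum : ⟪∑ p, f p • X p, v j l⟫ = ∑ p, f p * ⟪X p, v j l⟫ := by
      rw [sum_inner]
      exact Finset.sum_congr rfl fun p _ => real_inner_smul_left _ _ _
    rw [inner_neg_left, real_inner_smul_left, hsum]
  have hξ' : ∀ p, -σ' ≤ ⟪ξ p, v j l⟫ ∧ ⟪ξ p, v j l⟫ ≤ σ' :=
    fun p => abs_le.mp (hξ p j l)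
  -- lower bound on the sum
  have hSlb : -(P * σ') ≤ ∑ p, f p * ⟪X p, v j l⟫ := by
    have : ∀ p ∈ Finset.univ, -σ' ≤ f p * ⟪X p, v j l⟫ := by
      intro p _
      have hg : -σ' ≤ ⟪X p, v j l⟫ := by
        rw [key p]
        have h1 : (0:ℝ) ≤ (if p ∈ Pv (j, l) then z p else 0) := by
          split_ifs; exacts [hz p, le_refl 0]
        have h2 := (hα p (j, l)).1
        have h3 := (hξ' p).1
        linarith
      nlinarith [mul_le_mul_of_nonneg_left hg (hf0 p), hf0 p, hf1 p]
    calc -(P * σ') = ∑ _p : Fin P, -σ' := by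
          simp [Finset.sum_const, mul_comm]
      _ ≤ _ := Finset.sum_le_sum this
  -- upper bound on the sum
  have hSub : ∑ p, f p * ⟪X p, v j l⟫ ≤ (∑ p ∈ Pv (j, l), f p * z p) + P * (γ + σ') := by
    have step : ∀ p ∈ Finset.univ,
        f p * ⟪X p, v j l⟫ ≤ (if p ∈ Pv (j, l) then f p * z p else 0) + (γ + σ') := by
      intro p _
      have hg : ⟪X p, v j l⟫ ≤ (if p ∈ Pv (j, l) then z p else 0) + (γ + σ') := by
        rw [key p]
        have h2 := (hα p (j, l)).2
        have h3 := (hξ' p).2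
        linarith
      have h4 : f p * ⟪X p, v j l⟫ ≤ f p * ((if p ∈ Pv (j, l) then z p else 0) + (γ + σ')) :=
        mul_le_mul_of_nonneg_left hg (hf0 p)
      have h5 : f p * (if p ∈ Pv (j, l) then z p else 0)
          = (if p ∈ Pv (j, l) then f p * z p else 0) := by
        split_ifs <;> ring
      have h6 : f p * (γ + σ') ≤ γ + σ' := by
        nlinarith [hf0 p, hf1 p]
      nlinarith [h4, h5 ▸ le_refl (f p * (if p ∈ Pv (j, l) then z p else 0))]
    calc ∑ p, f p * ⟪X p, v j l⟫
        ≤ ∑ p : Fin P, ((if p ∈ Pv (j, l) then f p * z p else 0) + (γ + σ')) :=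
          Finset.sum_le_sum step
      _ = (∑ p ∈ Pv (j, l), f p * z p) + P * (γ + σ') := by
          rw [Finset.sum_add_distrib, Finset.sum_ite_mem, Finset.univ_inter,
            Finset.sum_const, Finset.card_univ, Fintype.card_fin, nsmul_eq_mul]
  constructor
  · rw [hinner]
    nlinarith [mul_le_mul_of_nonneg_left hSlb hL0]
  · rw [hinner]
    nlinarith [mul_le_mul_of_nonneg_left hSub hL0]
end

section
/- Tensor-power growth lemma (the kernel of the initial-growth claim: a correlation obeying Φ^{(t+1)} ≥ Φ^{(t)} + Θ(η/k)·(Φ^{(t)})^{q−1} grows from its initialization scale to constant order within T₀ = Θ̃(k/(η σ₀^{q−2})) iterations): let q ≥ 3 be an integer, c > 0, and let (x_t)_{t ∈ ℕ} be a nondecreasing sequence of reals with 0 < x₀ ≤ 1 such that x_{t+1} ≥ x_t + c · x_t^{q−1} whenever x_t ≤ 1. Then there exists an index t ≤ 2/(c · x₀^{q−2}) + log₂(1/x₀) + 2 with x_t ≥ 1, and hence x_s ≥ 1 for every s ≥ t. -/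
/-- Tensor-power growth lemma: a nondecreasing sequence with `0 < x₀ ≤ 1` satisfying
`x_{t+1} ≥ x_t + c·x_t^{q−1}` whenever `x_t ≤ 1` reaches the constant scale `1` within
`2/(c·x₀^{q−2}) + log₂(1/x₀) + 2` iterations, and stays above `1` afterwards. -/
theorem tensor_power_growth
    (q : ℕ) (hq : 3 ≤ q) (c : ℝ) (hc : 0 < c)
    (x : ℕ → ℝ) (hmono : Monotone x) (hx0 : 0 < x 0) (hx1 : x 0 ≤ 1)
    (hgrow : ∀ t, x t ≤ 1 → x t + c * x t ^ (q - 1) ≤ x (t + 1)) :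
    ∃ t : ℕ, (t : ℝ) ≤ 2 / (c * x 0 ^ (q - 2)) + Real.logb 2 (1 / x 0) + 2 ∧
      1 ≤ x t ∧ ∀ s, t ≤ s → 1 ≤ x s := by
  have hxpos : ∀ t, 0 < x t := fun t => lt_of_lt_of_le hx0 (hmono (Nat.zero_le t))
  have hcp : 0 < c * x 0 ^ (q - 1) := by positivity
  -- existence of a time where x reaches 1
  have hexists : ∃ t, 1 ≤ x t := by
    by_contra h
    push_neg at h
    have key : ∀ t : ℕ, x 0 + t * (c * x 0 ^ (q - 1)) ≤ x t := by
      intro t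
      induction t with
      | zero => simp
      | succ n ih =>
        have h1 := hgrow n (h n).le
        have h2 : x 0 ^ (q - 1) ≤ x n ^ (q - 1) :=
          pow_le_pow_left₀ hx0.le (hmono (Nat.zero_le n)) _
        push_cast
        nlinarith
    obtain ⟨t, ht⟩ := exists_nat_gt ((1 - x 0) / (c * x 0 ^ (q - 1)))
    have h3 := key t
    have h4 : (1 - x 0) / (c * x 0 ^ (q - 1)) * (c * x 0 ^ (q - 1))
        < t * (c * x 0 ^ (q - 1)) := mul_lt_mul_of_pos_right ht hcp
    rw [div_mul_cancel₀ _ hcp.ne'] at h4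
    linarith [h t]
  set T := Nat.find hexists with hTdef
  have hT1 : 1 ≤ x T := Nat.find_spec hexists
  have hTlt : ∀ t, t < T → x t < 1 := fun t ht => lt_of_not_ge (Nat.find_min hexists ht)
  refine ⟨T, ?_, hT1, fun s hs => le_trans hT1 (hmono hs)⟩
  set L := Real.logb 2 (1 / x 0) with hL
  have hLnn : 0 ≤ L := Real.logb_nonneg one_lt_two (by rw [le_div_iff₀ hx0]; linarith)
  set K := ⌈L⌉₊ with hK
  have hKL : (K : ℝ) ≤ L + 1 := (Nat.ceil_lt_add_one hLnn).le
  -- phase boundaries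
  set y : ℕ → ℝ := fun i => x 0 * 2 ^ i with hy
  have hypos : ∀ i, 0 < y i := fun i => by positivity
  have hyK : 1 ≤ y K := by
    have h2L : (2:ℝ) ^ L = 1 / x 0 := Real.rpow_logb two_pos (by norm_num) (by positivity)
    have hle : (2:ℝ) ^ L ≤ (2:ℝ) ^ (K:ℝ) :=
      Real.rpow_le_rpow_of_exponent_le one_le_two (Nat.le_ceil L)
    rw [Real.rpow_natCast, h2L, div_le_iff₀ hx0] at hle
    calc (1:ℝ) ≤ 2 ^ K * x 0 := hle
    _ = y K := by rw [hy]; ring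
  set S : ℕ → Finset ℕ :=
    fun i => (Finset.range T).filter (fun t => y i ≤ x t ∧ x t < y (i+1)) with hS
  -- every time before T falls in some phase
  have hcover : Finset.range T ⊆ (Finset.range K).biUnion S := by
    intro t ht
    rw [Finset.mem_range] at ht
    have hxt1 : x t < 1 := hTlt t ht
    have hxt0 : x 0 ≤ x t := hmono (Nat.zero_le t)
    have hex : ∃ j, x t < y (j + 1) := by
      obtain ⟨j, hj⟩ := pow_unbounded_of_one_lt (x t / x 0) (one_lt_two (α := ℝ))
      refine ⟨j, ?_⟩
      have h2 : (2:ℝ) ^ j ≤ 2 ^ (j+1) := by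
        apply pow_le_pow_right₀ one_le_two; omega
      rw [div_lt_iff₀ hx0] at hj
      calc x t < 2 ^ j * x 0 := hj
      _ ≤ 2 ^ (j+1) * x 0 := by nlinarith [hx0]
      _ = y (j+1) := by rw [hy]; ring
    set i := Nat.find hex with hi
    have hupper : x t < y (i + 1) := Nat.find_spec hex
    have hlower : y i ≤ x t := by
      rcases Nat.eq_zero_or_pos i with h0 | h0
      · rw [h0]; simpa [hy] using hxt0
      · have := Nat.find_min hex (m := i - 1) (by omega)
        push_neg at this
        have : y (i - 1 + 1) ≤ x t := this
        rwa [Nat.sub_add_cancel h0] at this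
    have hiK : i < K := by
      by_contra hik
      push_neg at hik
      have hyy : y K ≤ y i := by
        have h2 : (2:ℝ) ^ K ≤ 2 ^ i := pow_le_pow_right₀ one_le_two hik
        show x 0 * 2 ^ K ≤ x 0 * 2 ^ i
        nlinarith [hx0]
      linarith [hlower, hyK]
    rw [Finset.mem_biUnion]
    exact ⟨i, Finset.mem_range.mpr hiK,
      Finset.mem_filter.mpr ⟨Finset.mem_range.mpr ht, hlower, hupper⟩⟩
  -- cardinality bound for each phase
  have hcard : ∀ i, ((S i).card : ℝ) ≤ 1 / (c * y i ^ (q-2)) + 1 := by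
    intro i
    rcases (S i).eq_empty_or_nonempty with he | hne
    · rw [he]
      simp only [Finset.card_empty, Nat.cast_zero]
      have : 0 ≤ 1 / (c * y i ^ (q-2)) := by positivity
      linarith
    · set a := (S i).min' hne with ha'
      set b := (S i).max' hne with hb'
      have ha : a ∈ S i := (S i).min'_mem hne
      have hb : b ∈ S i := (S i).max'_mem hne
      have hab : a ≤ b := Finset.min'_le _ _ hb
      have hsub : S i ⊆ Finset.Icc a b := fun t ht =>
        Finset.mem_Icc.mpr ⟨Finset.min'_le _ _ ht, Finset.le_max' _ _ ht⟩
      clear_value a b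
      simp only [hS, Finset.mem_filter, Finset.mem_range] at ha hb
      have hbT : b < T := hb.1
      have hcardle : (S i).card ≤ b - a + 1 := by
        calc (S i).card ≤ (Finset.Icc a b).card := Finset.card_le_card hsub
        _ = b + 1 - a := Nat.card_Icc a b
        _ = b - a + 1 := by omega
      have grow : ∀ d, a + d ≤ b → x a + d * (c * y i ^ (q-1)) ≤ x (a + d) := by
        intro d
        induction d with
        | zero => intro _; simp
        | succ n ih =>
          intro hd
          have h1 : a + n < T := by omega
          have h2 : x (a+n) ≤ 1 := (hTlt _ h1).le
          have h3 := hgrow (a+n) h2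
          have h4 : y i ≤ x (a+n) := le_trans ha.2.1 (hmono (by omega))
          have h5 : y i ^ (q-1) ≤ x (a+n) ^ (q-1) := pow_le_pow_left₀ (hypos i).le h4 _
          have h6 := ih (by omega)
          have h7 : c * y i ^ (q-1) ≤ c * x (a+n) ^ (q-1) :=
            mul_le_mul_of_nonneg_left h5 hc.le
          have he : a + (n+1) = (a + n) + 1 := by omega
          rw [he]
          push_cast
          linarith
      have hgb := grow (b - a) (by omega)
      rw [Nat.add_sub_cancel' hab] at hgb
      have hxb : x b < y (i+1) := hb.2.2
      have hxa : y i ≤ x a := ha.2.1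
      have hy2 : y (i+1) = 2 * y i := by rw [hy]; ring
      have hba : ((b - a : ℕ) : ℝ) * (c * y i ^ (q-1)) < y i := by nlinarith
      have hpow : y i ^ (q-1) = y i ^ (q-2) * y i := by
        rw [← pow_succ]; congr 1; omega
      have hba2 : ((b - a : ℕ) : ℝ) < 1 / (c * y i ^ (q-2)) := by
        rw [lt_div_iff₀ (by positivity)]
        rw [hpow] at hba
        have hyipos := hypos i
        nlinarith
      calc ((S i).card : ℝ) ≤ ((b - a + 1 : ℕ) : ℝ) := by exact_mod_cast hcardle
      _ = ((b - a : ℕ) : ℝ) + 1 := by push_cast; ring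
      _ ≤ 1 / (c * y i ^ (q-2)) + 1 := by linarith
  -- sum up
  have hsum : (T : ℝ) ≤ ∑ i ∈ Finset.range K, (1 / (c * y i ^ (q-2)) + 1) := by
    have h1 : T ≤ ∑ i ∈ Finset.range K, (S i).card := by
      calc T = (Finset.range T).card := (Finset.card_range T).symm
      _ ≤ ((Finset.range K).biUnion S).card := Finset.card_le_card hcover
      _ ≤ ∑ i ∈ Finset.range K, (S i).card := Finset.card_biUnion_le
    calc (T:ℝ) ≤ ((∑ i ∈ Finset.range K, (S i).card : ℕ) : ℝ) := by exact_mod_cast h1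
    _ = ∑ i ∈ Finset.range K, ((S i).card : ℝ) := by push_cast; rfl
    _ ≤ _ := Finset.sum_le_sum (fun i _ => hcard i)
  have hterm : ∀ i, 1 / (c * y i ^ (q-2)) ≤ (1 / (c * x 0 ^ (q-2))) * (1/2)^i := by
    intro i
    have h2i : (1:ℝ) ≤ 2 ^ i := one_le_pow₀ one_le_two
    have hpw : ((2:ℝ) ^ i) ≤ ((2:ℝ) ^ i) ^ (q-2) := le_self_pow₀ (by linarith) (by omega)
    have hmono2 : c * x 0 ^ (q-2) * 2 ^ i ≤ c * y i ^ (q-2) := by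
      have hyi : y i ^ (q-2) = x 0 ^ (q-2) * (2 ^ i) ^ (q-2) := by
        show (x 0 * 2 ^ i) ^ (q-2) = _
        rw [mul_pow]
      rw [hyi, ← mul_assoc]
      exact mul_le_mul_of_nonneg_left hpw (by positivity)
    have hd := one_div_le_one_div_of_le (by positivity) hmono2
    calc 1 / (c * y i ^ (q-2)) ≤ 1 / (c * x 0 ^ (q-2) * 2 ^ i) := hd
    _ = (1 / (c * x 0 ^ (q-2))) * (1/2)^i := by
        rw [one_div_pow]
        field_simp
  have hgeo : ∑ i ∈ Finset.range K, ((1:ℝ)/2)^i ≤ 2 := by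
    rw [geom_sum_eq (by norm_num : (1/2:ℝ) ≠ 1)]
    have h0 : (0:ℝ) ≤ (1/2:ℝ)^K := by positivity
    rw [div_le_iff_of_neg (by norm_num : (1/2:ℝ) - 1 < 0)]
    linarith
  have hA : (0:ℝ) ≤ 1 / (c * x 0 ^ (q-2)) := by positivity
  calc (T : ℝ) ≤ ∑ i ∈ Finset.range K, (1 / (c * y i ^ (q-2)) + 1) := hsum
  _ = (∑ i ∈ Finset.range K, 1 / (c * y i ^ (q-2))) + K := by
      rw [Finset.sum_add_distrib]; simp
  _ ≤ (∑ i ∈ Finset.range K, (1 / (c * x 0 ^ (q-2))) * (1/2)^i) + K := by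
      have := Finset.sum_le_sum (fun i (_ : i ∈ Finset.range K) => hterm i)
      linarith
  _ = (1 / (c * x 0 ^ (q-2))) * (∑ i ∈ Finset.range K, ((1:ℝ)/2)^i) + K := by
      rw [← Finset.mul_sum]
  _ ≤ (1 / (c * x 0 ^ (q-2))) * 2 + K := by nlinarith
  _ = 2 / (c * x 0 ^ (q-2)) + K := by ring
  _ ≤ 2 / (c * x 0 ^ (q-2)) + (L + 1) := by linarith
  _ ≤ 2 / (c * x 0 ^ (q-2)) + L + 2 := by linarith
end
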